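/- arXiv:2103.03560 — 3 statements merged into one kernel-verified Lean document; each statement's English description precedes it below -/
import Mathlib

section
/- There exists a constant C such that for any integer m ≥ 0 and any real x with |x| ≥ 2√(2m+1), the m-th Hermite function satisfies |h_m(x)| ≤ C e^{-x²/8}. -/
open Real MeasureTheory

/-- The `m`-th Hermite function: the `L²`-normalized eigenfunction of the harmonic
oscillator `-d²/dx² + x²` with eigenvalue `2m+1`. -/
noncomputable def hermiteFunction (m : ℕ) (x : ℝ) : ℝ :=
  (Real.sqrt (2 ^ m * Nat.factorial m * Real.sqrt Real.pi))⁻¹ * (Real.sqrt 2) ^ m *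
    (Polynomial.aeval (Real.sqrt 2 * x) (Polynomial.hermite m) : ℝ) * Real.exp (-x ^ 2 / 2)

/-!
With `y = √2 x` one has `h_m(x)² = He_m(y)² e^{-x²} / (m! √π)`. The three-term recurrence
`He_{n+2}(y) = y He_{n+1}(y) - (n+1) He_n(y)` gives by induction `|He_n(y)| ≤ |y|ⁿ e^{n²/(2y²)}`,
hence `h_m(x)² ≤ (2x²)^m e^{m²/(2x²)} e^{-x²} / m!`. Once `x² ≥ 8m` the factor `e^{m²/(2x²)}` is at
most `e^{m/16}`, and the Taylor bound `(x²/2)^m / m! ≤ e^{x²/2}` together with `4 ≤ e^{3/2}` leaves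
`e^{25m/16 - x²/2} ≤ e^{-x²/4}`. So the theorem holds with `C = 1`.
-/

open scoped Nat
open Polynomial

namespace Polynomial

theorem derivative_hermite_succ (n : ℕ) :
    derivative (hermite (n + 1)) = (n + 1 : ℤ[X]) * hermite n := by
  induction n with
  | zero => simp
  | succ n ih =>
    rw [hermite_succ (n + 1), derivative_sub, derivative_mul, derivative_X, ih, hermite_succ n,
      ← Nat.cast_succ, derivative_natCast_mul]
    push_cast
    ring

theorem aeval_hermite_add_two (n : ℕ) (y : ℝ) :
    aeval y (hermite (n + 2)) = y * aeval y (hermite (n + 1)) - (n + 1) * aeval y (hermite n) := by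
  rw [hermite_succ (n + 1), derivative_hermite_succ]
  simp

theorem hermite_bound_step {y : ℝ} (hy : y ≠ 0) (n : ℕ) :
    |y| * (|y| ^ (n + 1) * exp ((n + 1 : ℝ) ^ 2 / (2 * y ^ 2)))
        + (n + 1) * (|y| ^ n * exp ((n : ℝ) ^ 2 / (2 * y ^ 2)))
      ≤ |y| ^ (n + 2) * exp ((n + 2 : ℝ) ^ 2 / (2 * y ^ 2)) := by
  have hmono : exp ((n : ℝ) ^ 2 / (2 * y ^ 2)) ≤ exp ((n + 1 : ℝ) ^ 2 / (2 * y ^ 2)) := by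
    gcongr; linarith
  set E := exp ((n + 1 : ℝ) ^ 2 / (2 * y ^ 2))
  have hsplit : exp ((n + 2 : ℝ) ^ 2 / (2 * y ^ 2)) = E * exp ((2 * n + 3) / (2 * y ^ 2)) := by
    rw [← exp_add]; congr 1; field_simp; ring
  have hgrowth : y ^ 2 + (n + 1) ≤ y ^ 2 * exp ((2 * n + 3) / (2 * y ^ 2)) := by
    have := add_one_le_exp ((2 * n + 3) / (2 * y ^ 2))
    have h : y ^ 2 * ((2 * n + 3) / (2 * y ^ 2) + 1) = y ^ 2 + (2 * n + 3) / 2 := by field_simp; ring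
    nlinarith
  calc |y| * (|y| ^ (n + 1) * E) + (n + 1) * (|y| ^ n * exp ((n : ℝ) ^ 2 / (2 * y ^ 2)))
      ≤ |y| * (|y| ^ (n + 1) * E) + (n + 1) * (|y| ^ n * E) := by gcongr
    _ = |y| ^ n * (y ^ 2 + (n + 1)) * E := by rw [← sq_abs]; ring
    _ ≤ |y| ^ n * (y ^ 2 * exp ((2 * n + 3) / (2 * y ^ 2))) * E := by gcongr
    _ = |y| ^ (n + 2) * exp ((n + 2 : ℝ) ^ 2 / (2 * y ^ 2)) := by rw [hsplit, ← sq_abs]; ring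

theorem abs_aeval_hermite_le {y : ℝ} (hy : y ≠ 0) (n : ℕ) :
    |aeval y (hermite n)| ≤ |y| ^ n * exp ((n : ℝ) ^ 2 / (2 * y ^ 2)) := by
  induction n using Nat.twoStepInduction with
  | zero => simp
  | one => simpa using le_mul_of_one_le_right (abs_nonneg y) (one_le_exp (by positivity))
  | more n ih₀ ih₁ =>
    rw [aeval_hermite_add_two]
    push_cast at ih₁ ⊢
    calc |y * aeval y (hermite (n + 1)) - (n + 1) * aeval y (hermite n)|
        ≤ |y| * |aeval y (hermite (n + 1))| + (n + 1) * |aeval y (hermite n)| := by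
          refine (abs_sub _ _).trans_eq ?_
          rw [abs_mul, abs_mul, abs_of_nonneg (by positivity : (0 : ℝ) ≤ n + 1)]
      _ ≤ _ := by grw [ih₀, ih₁]; exact hermite_bound_step hy n

theorem sq_aeval_hermite_le {y : ℝ} (hy : y ≠ 0) (n : ℕ) :
    aeval y (hermite n) ^ 2 ≤ (y ^ 2) ^ n * exp ((n : ℝ) ^ 2 / y ^ 2) := by
  calc aeval y (hermite n) ^ 2 = |aeval y (hermite n)| ^ 2 := (sq_abs _).symm
    _ ≤ (|y| ^ n * exp ((n : ℝ) ^ 2 / (2 * y ^ 2))) ^ 2 := by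
        gcongr; exact abs_aeval_hermite_le hy n
    _ = (y ^ 2) ^ n * exp ((n : ℝ) ^ 2 / y ^ 2) := by
        rw [mul_pow, ← pow_mul, mul_comm n, pow_mul, sq_abs, ← exp_nat_mul]
        congr 2; field_simp; push_cast; ring

end Polynomial

theorem hermiteFunction_sq (m : ℕ) (x : ℝ) :
    hermiteFunction m x ^ 2 = aeval (√2 * x) (hermite m) ^ 2 * exp (-x ^ 2) / (m ! * √π) := by
  have h2m : (√2 ^ m) ^ 2 = 2 ^ m := by rw [← pow_mul, mul_comm, pow_mul, sq_sqrt zero_le_two]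
  rw [hermiteFunction, mul_pow, mul_pow, mul_pow, inv_pow, sq_sqrt (by positivity), h2m,
    ← exp_nat_mul]
  field_simp
  ring_nf

theorem four_le_exp_three_halves : (4 : ℝ) ≤ exp (3 / 2) := by
  have h := add_one_le_exp (1 / 2)
  rw [show (3 / 2 : ℝ) = 1 + 1 / 2 by norm_num, exp_add]
  nlinarith [exp_one_gt_d9]

theorem pow_mul_exp_div_factorial_le {m : ℕ} {u : ℝ} (hu : 8 * m ≤ u) :
    (2 * u) ^ m * exp (m ^ 2 / (2 * u)) * exp (-u) / m ! ≤ exp (-u / 4) := by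
  have hu0 : 0 ≤ u := by linarith
  have hcorr : (m : ℝ) ^ 2 / (2 * u) ≤ m / 16 :=
    div_le_of_le_mul₀ (by positivity) (by positivity) (by nlinarith)
  have htaylor : (2 * u) ^ m / m ! ≤ exp (3 / 2) ^ m * exp (u / 2) := by
    rw [show 2 * u = 4 * (u / 2) by ring, mul_pow, mul_div_assoc]
    gcongr
    · exact four_le_exp_three_halves
    · exact pow_div_factorial_le_exp _ (by positivity) m
  calc (2 * u) ^ m * exp (m ^ 2 / (2 * u)) * exp (-u) / m !
      = (2 * u) ^ m / m ! * exp (m ^ 2 / (2 * u)) * exp (-u) := by ring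
    _ ≤ exp (3 / 2) ^ m * exp (u / 2) * exp (m / 16) * exp (-u) := by gcongr
    _ = exp (25 * m / 16 - u / 2) := by
        rw [← exp_nat_mul, ← exp_add, ← exp_add, ← exp_add]; ring_nf
    _ ≤ exp (-u / 4) := by gcongr; linarith

theorem sq_hermiteFunction_le {x : ℝ} (hx : x ≠ 0) (m : ℕ) :
    hermiteFunction m x ^ 2 ≤ (2 * x ^ 2) ^ m * exp (m ^ 2 / (2 * x ^ 2)) * exp (-x ^ 2) / m ! := by
  have hy : (√2 * x) ^ 2 = 2 * x ^ 2 := by rw [mul_pow, sq_sqrt zero_le_two]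
  have hπ : 1 ≤ √π := one_le_sqrt.mpr (by linarith [pi_gt_three])
  rw [hermiteFunction_sq]
  calc aeval (√2 * x) (hermite m) ^ 2 * exp (-x ^ 2) / (m ! * √π)
      ≤ aeval (√2 * x) (hermite m) ^ 2 * exp (-x ^ 2) / m ! := by
        gcongr; exact le_mul_of_one_le_right (by positivity) hπ
    _ ≤ _ := by
        gcongr
        simpa [hy] using sq_aeval_hermite_le (by positivity : √2 * x ≠ 0) m

/-- There is a constant `C` such that for every `m` and every `x` with
`|x| ≥ 2√(2m+1)`, one has `|h_m(x)| ≤ C e^{-x²/8}`. -/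
theorem hermite_pointwise_tail_bound :
    ∃ C > 0, ∀ (m : ℕ) (x : ℝ), 2 * Real.sqrt (2 * (m : ℝ) + 1) ≤ |x| →
      |hermiteFunction m x| ≤ C * Real.exp (-x ^ 2 / 8) := by
  refine ⟨1, one_pos, fun m x hx => ?_⟩
  have hx0 : x ≠ 0 := abs_pos.mp (lt_of_lt_of_le (by positivity) hx)
  have hx2 : 8 * (m : ℝ) ≤ x ^ 2 := by
    have := pow_le_pow_left₀ (by positivity) hx 2
    rw [mul_pow, sq_sqrt (by positivity), sq_abs] at this
    linarith
  have hsq : hermiteFunction m x ^ 2 ≤ exp (-x ^ 2 / 8) ^ 2 :=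
    calc hermiteFunction m x ^ 2
        ≤ (2 * x ^ 2) ^ m * exp (m ^ 2 / (2 * x ^ 2)) * exp (-x ^ 2) / m ! :=
          sq_hermiteFunction_le hx0 m
      _ ≤ exp (-x ^ 2 / 4) := pow_mul_exp_div_factorial_le hx2
      _ = exp (-x ^ 2 / 8) ^ 2 := by rw [← exp_nat_mul]; ring_nf
  rw [one_mul]
  exact abs_le_of_sq_le_sq hsq (exp_pos _).le
end

section
/- Let X_n = g_n + i h_n be complex Gaussians with {g_n, h_n} iid standard real Gaussians. If indices n₁, n₁', n₁'', n₂, n₂', n₂'' ∈ I satisfy E[X_{n₁} X_{n₁'} \overline{X_{n₁''}} \overline{X_{n₂}} \overline{X_{n₂'}} X_{n₂''}] ≠ 0, then either (up to swapping n₁ with n₁' and n₂ with n₂') one has n₁ = n₂, n₁' = n₂', n₁'' = n₂'', or n₁ = n₁'', n₁' = n₂', n₂ = n₂''. -/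
/-!
Write `X_n = x_{(n,false)} + i x_{(n,true)}` for the real Gaussian family `x`. For a fixed index
`v`, the map `X_v ↦ i X_v`, i.e. `(x_{(v,false)}, x_{(v,true)}) ↦ (-x_{(v,true)}, x_{(v,false)})`,
preserves the joint law of `x`, because it sends an iid standard Gaussian family to another one.
It multiplies the monomial `X_{n₁} X_{n₁'} X_{n₂''} · conj (X_{n₁''} X_{n₂} X_{n₂'})` by
`i ^ a (-i) ^ b`, where `a` and `b` count the occurrences of `v` among the unconjugated and the
conjugated factors. A nonzero expectation therefore forces `a ≡ b [MOD 4]`, hence `a = b` as both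
are at most `3`. So the multisets `{n₁, n₁', n₂''}` and `{n₁'', n₂, n₂'}` coincide, and the
pairings are read off from that.
-/

open Real MeasureTheory ProbabilityTheory

/-- One of the two index-pairing configurations, for indices
`(a, b, c, d, e, f) = (n₁, n₁', n₁'', n₂, n₂', n₂'')`:
either `n₁ = n₂, n₁' = n₂', n₁'' = n₂''`, or `n₁ = n₁'', n₁' = n₂', n₂ = n₂''`. -/
def gaussianSexticPairing {I : Type*} (a b c d e f : I) : Prop :=
  (a = d ∧ b = e ∧ c = f) ∨ (a = c ∧ b = e ∧ d = f)

open ComplexConjugate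

lemma Complex.I_pow_mul_conj_I_pow_eq_one_iff {a b : ℕ} :
    Complex.I ^ a * conj Complex.I ^ b = 1 ↔ a ≡ b [MOD 4] := by
  rw [Complex.conj_I, ← Complex.inv_I, inv_pow, mul_inv_eq_one₀ (pow_ne_zero _ Complex.I_ne_zero),
    (Complex.isPrimitiveRoot_I.isOfFinOrder four_ne_zero).pow_eq_pow_iff_modEq,
    ← Complex.isPrimitiveRoot_I.eq_orderOf]

lemma gaussianSexticPairing_of_multiset_eq {I : Type*} {n₁ n₁' n₁'' n₂ n₂' n₂'' : I}
    (h : ({n₁, n₁', n₂''} : Multiset I) = {n₁'', n₂, n₂'}) :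
    gaussianSexticPairing n₁ n₁' n₁'' n₂ n₂' n₂'' ∨
    gaussianSexticPairing n₁' n₁ n₁'' n₂ n₂' n₂'' ∨
    gaussianSexticPairing n₁ n₁' n₁'' n₂' n₂ n₂'' ∨
    gaussianSexticPairing n₁' n₁ n₁'' n₂' n₂ n₂'' := by
  simp only [Multiset.insert_eq_cons, Multiset.cons_eq_cons, Multiset.singleton_eq_cons_iff] at h
  unfold gaussianSexticPairing
  aesop

section Coordinates

variable {I : Type*}

def complexCoord (x : I × Bool → ℝ) (n : I) : ℂ := x (n, false) + x (n, true) * Complex.I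

/-- Multiplication of the `v`-th complex coordinate by `i`, written as a coordinate swap followed
by a sign change so that it visibly maps independent families to independent families. -/
def rotateAt [DecidableEq I] (v : I) (x : I × Bool → ℝ) (p : I × Bool) : ℝ :=
  if p = (v, false) then -x (Equiv.swap (v, false) (v, true) p)
  else x (Equiv.swap (v, false) (v, true) p)

def complexMonomial (s t : Multiset I) (x : I × Bool → ℝ) : ℂ :=
  (s.map (complexCoord x)).prod * conj (t.map (complexCoord x)).prod

lemma measurable_complexCoord (n : I) :
    Measurable fun x : I × Bool → ℝ => complexCoord x n := by
  unfold complexCoord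
  fun_prop

lemma measurable_rotateAt [DecidableEq I] (v : I) : Measurable (rotateAt (I := I) v) := by
  refine measurable_pi_lambda _ fun p => ?_
  unfold rotateAt
  split_ifs <;> fun_prop

lemma measurable_complexMonomial (s t : Multiset I) : Measurable (complexMonomial s t) := by
  have hprod (s : Multiset I) : Measurable fun x => (s.map (complexCoord x)).prod := by
    induction s using Multiset.induction_on with
    | empty =>
      simp only [Multiset.map_zero, Multiset.prod_zero]
      exact measurable_const
    | cons n s ih =>
      simp only [Multiset.map_cons, Multiset.prod_cons]
      exact (measurable_complexCoord n).mul ih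
  exact (hprod s).mul (Complex.continuous_conj.measurable.comp (hprod t))

lemma complexCoord_rotateAt [DecidableEq I] (v : I) (x : I × Bool → ℝ) (n : I) :
    complexCoord (rotateAt v x) n = (if n = v then Complex.I else 1) * complexCoord x n := by
  unfold complexCoord rotateAt
  by_cases hn : n = v
  · subst hn
    simp only [↓reduceIte, Equiv.swap_apply_left, Complex.ofReal_neg, Prod.mk.injEq,
      Bool.true_eq_false, and_false, Equiv.swap_apply_right]
    linear_combination -(x (n, true) : ℂ) * Complex.I_sq
  · simp [hn, Equiv.swap_apply_of_ne_of_ne]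

lemma prod_map_complexCoord_rotateAt [DecidableEq I] (v : I) (x : I × Bool → ℝ)
    (s : Multiset I) :
    (s.map (complexCoord (rotateAt v x))).prod
      = Complex.I ^ s.count v * (s.map (complexCoord x)).prod := by
  simp_rw [complexCoord_rotateAt, Multiset.prod_map_mul]
  rw [Multiset.prod_map_eq_pow_single v (fun n hn _ => if_neg hn), if_pos rfl]

lemma complexMonomial_rotateAt [DecidableEq I] (v : I) (x : I × Bool → ℝ) (s t : Multiset I) :
    complexMonomial s t (rotateAt v x)
      = Complex.I ^ s.count v * conj Complex.I ^ t.count v * complexMonomial s t x := by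
  simp only [complexMonomial, prod_map_complexCoord_rotateAt, map_mul, map_pow]
  ring

end Coordinates

section GaussianFamily

variable {Ω I : Type*} [MeasurableSpace Ω] {P : Measure Ω}

lemma map_eq_infinitePi_gaussianReal {Y : I → Ω → ℝ} (hmeas : ∀ p, Measurable (Y p))
    (hindep : iIndepFun Y P) (hgauss : ∀ p, P.map (Y p) = gaussianReal 0 1) :
    P.map (fun ω p => Y p ω) = Measure.infinitePi fun _ => gaussianReal 0 1 := by
  simp_rw [hindep.map_fun_eq_infinitePi_map hmeas, hgauss]

variable [DecidableEq I] {Y : I × Bool → Ω → ℝ}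

lemma iIndepFun_rotateAt (hindep : iIndepFun Y P) (v : I) :
    iIndepFun (fun p ω => rotateAt v (Y · ω) p) P :=
  (hindep.precomp (Equiv.swap (v, false) (v, true)).injective).comp
    (fun p r => if p = (v, false) then -r else r) fun p => by split_ifs <;> fun_prop

lemma map_rotateAt_apply (hmeas : ∀ p, Measurable (Y p))
    (hgauss : ∀ p, P.map (Y p) = gaussianReal 0 1) (v : I) (p : I × Bool) :
    P.map (fun ω => rotateAt v (Y · ω) p) = gaussianReal 0 1 := by
  unfold rotateAt
  split_ifs
  · rw [← neg_zero, ← gaussianReal_map_neg, ← hgauss, Measure.map_map measurable_neg (hmeas _)]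
    rfl
  · exact hgauss _

lemma map_rotateAt (hmeas : ∀ p, Measurable (Y p)) (hindep : iIndepFun Y P)
    (hgauss : ∀ p, P.map (Y p) = gaussianReal 0 1) (v : I) :
    P.map (fun ω => rotateAt v (Y · ω)) = P.map (fun ω p => Y p ω) := by
  have hrot p : Measurable fun ω => rotateAt v (Y · ω) p :=
    (measurable_rotateAt v).eval.comp (measurable_pi_lambda _ hmeas)
  exact (map_eq_infinitePi_gaussianReal hrot (iIndepFun_rotateAt hindep v)
    (map_rotateAt_apply hmeas hgauss v)).trans
      (map_eq_infinitePi_gaussianReal hmeas hindep hgauss).symm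

lemma count_modEq_of_integral_complexMonomial_ne_zero (hmeas : ∀ p, Measurable (Y p))
    (hindep : iIndepFun Y P) (hgauss : ∀ p, P.map (Y p) = gaussianReal 0 1)
    {s t : Multiset I} (h : ∫ ω, complexMonomial s t (Y · ω) ∂P ≠ 0) (v : I) :
    s.count v ≡ t.count v [MOD 4] := by
  have hY : Measurable fun ω p => Y p ω := measurable_pi_lambda _ hmeas
  have hrotY : Measurable fun ω => rotateAt v (Y · ω) := (measurable_rotateAt v).comp hY
  have hF := (measurable_complexMonomial s t).aestronglyMeasurable (μ := P.map fun ω p => Y p ω)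
  have hinvariant : ∫ ω, complexMonomial s t (Y · ω) ∂P
      = Complex.I ^ s.count v * conj Complex.I ^ t.count v *
          ∫ ω, complexMonomial s t (Y · ω) ∂P :=
    calc ∫ ω, complexMonomial s t (Y · ω) ∂P
        = ∫ x, complexMonomial s t x ∂(P.map fun ω p => Y p ω) :=
          (integral_map hY.aemeasurable hF).symm
      _ = ∫ x, complexMonomial s t x ∂(P.map fun ω => rotateAt v (Y · ω)) := by
          rw [map_rotateAt hmeas hindep hgauss v]
      _ = ∫ ω, complexMonomial s t (rotateAt v (Y · ω)) ∂P :=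
          integral_map hrotY.aemeasurable (by rwa [map_rotateAt hmeas hindep hgauss v])
      _ = _ := by simp_rw [complexMonomial_rotateAt, integral_const_mul]
  rw [← Complex.I_pow_mul_conj_I_pow_eq_one_iff]
  exact mul_right_cancel₀ h (hinvariant.symm.trans (one_mul _).symm)

end GaussianFamily

theorem complex_gaussian_sextic_pairing_general
    {Ω : Type*} [MeasurableSpace Ω] (P : Measure Ω)
    {I : Type*}
    (Y : I × Bool → Ω → ℝ) (hmeas : ∀ p, Measurable (Y p))
    (hindep : iIndepFun Y P)
    (hgauss : ∀ p, P.map (Y p) = gaussianReal 0 1)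
    (X : I → Ω → ℂ)
    (hX : ∀ n ω, X n ω = (Y (n, false) ω : ℂ) + (Y (n, true) ω : ℂ) * Complex.I)
    (n₁ n₁' n₁'' n₂ n₂' n₂'' : I)
    (h : (∫ ω, X n₁ ω * X n₁' ω * (starRingEnd ℂ) (X n₁'' ω) *
        (starRingEnd ℂ) (X n₂ ω) * (starRingEnd ℂ) (X n₂' ω) * X n₂'' ω ∂P) ≠ 0) :
    gaussianSexticPairing n₁ n₁' n₁'' n₂ n₂' n₂'' ∨
    gaussianSexticPairing n₁' n₁ n₁'' n₂ n₂' n₂'' ∨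
    gaussianSexticPairing n₁ n₁' n₁'' n₂' n₂ n₂'' ∨
    gaussianSexticPairing n₁' n₁ n₁'' n₂' n₂ n₂'' := by
  classical
  have hmonomial ω : X n₁ ω * X n₁' ω * conj (X n₁'' ω) * conj (X n₂ ω) * conj (X n₂' ω) *
      X n₂'' ω = complexMonomial {n₁, n₁', n₂''} {n₁'', n₂, n₂'} (Y · ω) := by
    simp only [hX, complexMonomial, complexCoord, Multiset.insert_eq_cons, Multiset.map_cons,
      Multiset.map_singleton, Multiset.prod_cons, Multiset.prod_singleton, map_mul]
    ring
  simp_rw [hmonomial] at h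
  refine gaussianSexticPairing_of_multiset_eq (Multiset.ext.2 fun v => ?_)
  have hcount_lt {u : Multiset I} (hu : u.card = 3) : u.count v < 4 :=
    (u.count_le_card v).trans_lt (by omega)
  exact (count_modEq_of_integral_complexMonomial_ne_zero hmeas hindep hgauss h v).eq_of_lt_of_lt
    (hcount_lt (by simp)) (hcount_lt (by simp))

/-- Sixth-moment index pairing for complex Gaussians: if
`E[X_{n₁} X_{n₁'} conj(X_{n₁''}) conj(X_{n₂}) conj(X_{n₂'}) X_{n₂''}] ≠ 0`, then,
up to swapping `n₁` with `n₁'` and `n₂` with `n₂'`, either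
`n₁ = n₂, n₁' = n₂', n₁'' = n₂''`, or `n₁ = n₁'', n₁' = n₂', n₂ = n₂''`. -/
theorem complex_gaussian_sextic_pairing
    {Ω : Type*} [MeasurableSpace Ω] (P : Measure Ω) [IsProbabilityMeasure P]
    {I : Type*} [Countable I]
    (Y : I × Bool → Ω → ℝ) (hmeas : ∀ p, Measurable (Y p))
    (hindep : iIndepFun Y P)
    (hgauss : ∀ p, P.map (Y p) = gaussianReal 0 1)
    (X : I → Ω → ℂ)
    (hX : ∀ n ω, X n ω = (Y (n, false) ω : ℂ) + (Y (n, true) ω : ℂ) * Complex.I)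
    (n₁ n₁' n₁'' n₂ n₂' n₂'' : I)
    (h : (∫ ω, X n₁ ω * X n₁' ω * (starRingEnd ℂ) (X n₁'' ω) *
        (starRingEnd ℂ) (X n₂ ω) * (starRingEnd ℂ) (X n₂' ω) * X n₂'' ω ∂P) ≠ 0) :
    gaussianSexticPairing n₁ n₁' n₁'' n₂ n₂' n₂'' ∨
    gaussianSexticPairing n₁' n₁ n₁'' n₂ n₂' n₂'' ∨
    gaussianSexticPairing n₁ n₁' n₁'' n₂' n₂ n₂'' ∨
    gaussianSexticPairing n₁' n₁ n₁'' n₂' n₂ n₂'' :=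
  complex_gaussian_sextic_pairing_general P Y hmeas hindep hgauss X hX n₁ n₁' n₁'' n₂ n₂' n₂'' h
end

section
/- (Yudovich-type uniqueness estimate) Let T₁ > 0 and φ : [0, T₁] → [0, ∞) be continuous with φ(0) = 0, and suppose there exists M > 0 such that for every p ≥ 2 and every t ∈ [0, T₁], φ'(t) ≤ M √p φ(t)^{1 − 1/p}. Then φ ≡ 0 on [0, T₁]. -/
open Real Set Filter Topology

/-!
The barrier `(ε + c t) ^ p` with `c p > M √p` satisfies `B' = c p B ^ (1 - 1/p)`, so `φ` can never
cross it from below; letting `ε → 0` gives `φ t ≤ (2 M t / √p) ^ p` for every `p ≥ 2`, and the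
right-hand side tends to `0` as `p → ∞`.
-/

theorem le_add_mul_rpow_of_hasDerivWithinAt_le {φ φ' : ℝ → ℝ} {T p K c ε : ℝ}
    (hp : 0 < p) (hc : 0 ≤ c) (hKc : K < c * p) (hε : 0 < ε)
    (hcont : ContinuousOn φ (Icc 0 T)) (h0 : φ 0 ≤ ε ^ p)
    (hderiv : ∀ t ∈ Ico 0 T, HasDerivWithinAt φ (φ' t) (Ici t) t)
    (hineq : ∀ t ∈ Ico 0 T, φ' t ≤ K * φ t ^ (1 - 1 / p)) :
    ∀ t ∈ Icc 0 T, φ t ≤ (ε + c * t) ^ p := by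
  have hbase : ∀ t ∈ Ico 0 T, 0 < ε + c * t := fun t ht => by have := ht.1; positivity
  refine image_le_of_deriv_right_lt_deriv_boundary' hcont hderiv (by simpa using h0)
    (B' := fun t => c * p * (ε + c * t) ^ (p - 1)) ?_ (fun t ht => ?_) (fun t ht hcontact => ?_)
  · exact ((continuous_const.add (continuous_const.mul continuous_id)).rpow_const
      fun _ => Or.inr hp.le).continuousOn
  · simpa using (((hasDerivAt_id t).const_mul c).const_add ε).rpow_const
      (Or.inl (hbase t ht).ne') |>.hasDerivWithinAt
  · have hpow : φ t ^ (1 - 1 / p) = (ε + c * t) ^ (p - 1) := by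
      rw [hcontact, ← rpow_mul (hbase t ht).le]
      congr 1
      field_simp
    calc φ' t ≤ K * (ε + c * t) ^ (p - 1) := hpow ▸ hineq t ht
      _ < c * p * (ε + c * t) ^ (p - 1) :=
        mul_lt_mul_of_pos_right hKc (rpow_pos_of_pos (hbase t ht) _)

theorem le_mul_rpow_of_hasDerivWithinAt_le {φ φ' : ℝ → ℝ} {T p K c : ℝ}
    (hp : 0 < p) (hc : 0 ≤ c) (hKc : K < c * p)
    (hcont : ContinuousOn φ (Icc 0 T)) (h0 : φ 0 ≤ 0)
    (hderiv : ∀ t ∈ Ico 0 T, HasDerivWithinAt φ (φ' t) (Ici t) t)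
    (hineq : ∀ t ∈ Ico 0 T, φ' t ≤ K * φ t ^ (1 - 1 / p)) :
    ∀ t ∈ Icc 0 T, φ t ≤ (c * t) ^ p := by
  intro t ht
  have hlim : Tendsto (fun ε : ℝ => (ε + c * t) ^ p) (𝓝[>] 0) (𝓝 ((c * t) ^ p)) := by
    have hcont_ε : Continuous fun ε : ℝ => (ε + c * t) ^ p :=
      (continuous_id.add continuous_const).rpow_const fun _ => Or.inr hp.le
    simpa using (hcont_ε.tendsto 0).mono_left nhdsWithin_le_nhds
  refine ge_of_tendsto hlim ?_
  filter_upwards [self_mem_nhdsWithin] with ε hε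
  exact le_add_mul_rpow_of_hasDerivWithinAt_le hp hc hKc hε hcont
    (h0.trans (rpow_nonneg hε.le p)) hderiv hineq t ht

theorem tendsto_div_sqrt_rpow_self_atTop (a : ℝ) :
    Tendsto (fun p : ℝ => (a / √p) ^ p) atTop (𝓝 0) := by
  have hsmall : ∀ᶠ p : ℝ in atTop, |a| / √p ≤ 1 / 2 :=
    (tendsto_const_nhds.div_atTop tendsto_sqrt_atTop).eventually
      (ge_mem_nhds (by norm_num : (0 : ℝ) < 1 / 2))
  refine squeeze_zero_norm' ?_ (tendsto_rpow_atTop_of_base_lt_one (1 / 2) (by norm_num) (by norm_num))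
  filter_upwards [hsmall, eventually_ge_atTop 0] with p hp hp0
  calc ‖(a / √p) ^ p‖ ≤ |a / √p| ^ p := abs_rpow_le_abs_rpow _ _
    _ = (|a| / √p) ^ p := by rw [abs_div, abs_of_nonneg (sqrt_nonneg p)]
    _ ≤ (1 / 2) ^ p := rpow_le_rpow (by positivity) hp hp0

theorem yudovich_uniqueness_general (T₁ M : ℝ) (hM : 0 < M)
    (φ φ' : ℝ → ℝ)
    (hcont : ContinuousOn φ (Icc 0 T₁))
    (hnonneg : ∀ t ∈ Icc 0 T₁, 0 ≤ φ t)
    (h0 : φ 0 = 0)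
    (hderiv : ∀ t ∈ Icc 0 T₁, HasDerivWithinAt φ (φ' t) (Icc 0 T₁) t)
    (hineq : ∀ p : ℝ, 2 ≤ p → ∀ t ∈ Icc 0 T₁,
      φ' t ≤ M * Real.sqrt p * φ t ^ (1 - 1 / p)) :
    ∀ t ∈ Icc 0 T₁, φ t = 0 := by
  have hderiv_right : ∀ t ∈ Ico 0 T₁, HasDerivWithinAt φ (φ' t) (Ici t) t := fun t ht =>
    ((hderiv t (Ico_subset_Icc_self ht)).mono (Icc_subset_Icc_left ht.1)).mono_of_mem_nhdsWithin
      (Icc_mem_nhdsGE ht.2)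
  intro t ht
  have hbound : ∀ p : ℝ, 2 ≤ p → φ t ≤ (2 * M * t / √p) ^ p := fun p hp => by
    have hsqrt : 0 < √p := sqrt_pos.mpr (by linarith)
    have hKc : M * √p < 2 * M / √p * p := by
      have hcp : 2 * M / √p * p = 2 * (M * √p) := by
        field_simp
        rw [sq_sqrt (by linarith)]
      rw [hcp]
      linarith [mul_pos hM hsqrt]
    simpa [div_mul_eq_mul_div] using le_mul_rpow_of_hasDerivWithinAt_le (by linarith)
      (by positivity) hKc hcont h0.le hderiv_right
      (fun s hs => hineq p hp s (Ico_subset_Icc_self hs)) t ht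
  have hle : φ t ≤ 0 :=
    ge_of_tendsto (tendsto_div_sqrt_rpow_self_atTop (2 * M * t)) ((eventually_ge_atTop 2).mono hbound)
  exact le_antisymm hle (hnonneg t ht)

/-- Yudovich-type uniqueness estimate: if `φ : [0,T₁] → [0,∞)` is continuous,
`φ(0) = 0`, `φ` is differentiable on `[0,T₁]` with derivative `φ'`, and for some
`M > 0` one has `φ'(t) ≤ M √p · φ(t)^{1-1/p}` for every `p ≥ 2` and every
`t ∈ [0,T₁]`, then `φ ≡ 0` on `[0,T₁]`. -/
theorem yudovich_uniqueness (T₁ M : ℝ) (hT : 0 < T₁) (hM : 0 < M)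
    (φ φ' : ℝ → ℝ)
    (hcont : ContinuousOn φ (Icc 0 T₁))
    (hnonneg : ∀ t ∈ Icc 0 T₁, 0 ≤ φ t)
    (h0 : φ 0 = 0)
    (hderiv : ∀ t ∈ Icc 0 T₁, HasDerivWithinAt φ (φ' t) (Icc 0 T₁) t)
    (hineq : ∀ p : ℝ, 2 ≤ p → ∀ t ∈ Icc 0 T₁,
      φ' t ≤ M * Real.sqrt p * φ t ^ (1 - 1 / p)) :
    ∀ t ∈ Icc 0 T₁, φ t = 0 :=
  yudovich_uniqueness_general T₁ M hM φ φ' hcont hnonneg h0 hderiv hineq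
end
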